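/- Let (b_j) be a wide-(s) sequence in a real Banach space X. Then there exist bounded sequences (f_j) and (g_j) in the dual X* satisfying: (i) f_i(b_j) = 1 for all j ≥ i and f_i(b_j) = 0 for all j < i; (ii) g_j(b_i) = 1 for all j ≥ i and g_j(b_i) = 0 for all j < i. -/

import Mathlib

open Finset Filter Metric NormedSpace

noncomputable section

universe u

variable {X Y : Type*} [NormedAddCommGroup X] [NormedSpace ℝ X]
  [NormedAddCommGroup Y] [NormedSpace ℝ Y]

/-- `b` is a `lam`-basic sequence: for all scalars `c` and all `k ≤ n`,
`‖∑_{j<k} c_j b_j‖ ≤ lam * ‖∑_{j<n} c_j b_j‖`. -/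
def IsBasicWith (lam : ℝ) (b : ℕ → X) : Prop :=
  ∀ (c : ℕ → ℝ) (k n : ℕ), k ≤ n →
    ‖∑ j ∈ Finset.range k, c j • b j‖ ≤ lam * ‖∑ j ∈ Finset.range n, c j • b j‖

/-- `b` is a `lam`-wide-(s) sequence: it is `2lam`-basic, `‖b j‖ ≤ lam` for all `j`,
and `|∑_{k≤j<n} c_j| ≤ lam * ‖∑_{j<n} c_j b_j‖` for all scalars and `k ≤ n`. -/
def IsWideSWith (lam : ℝ) (b : ℕ → X) : Prop :=
  IsBasicWith (2 * lam) b ∧ (∀ j, ‖b j‖ ≤ lam) ∧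
    ∀ (c : ℕ → ℝ) (k n : ℕ), k ≤ n →
      |∑ j ∈ Finset.Ico k n, c j| ≤ lam * ‖∑ j ∈ Finset.range n, c j • b j‖

/-- `b` is a wide-(s) sequence: `lam`-wide-(s) for some `lam ≥ 1`. -/
def IsWideS (b : ℕ → X) : Prop := ∃ lam, 1 ≤ lam ∧ IsWideSWith lam b

lemma ico_eq_filter (k n : ℕ) :
    Finset.Ico k n = (Finset.range n).filter (fun j => k ≤ j) := by
  ext j; simp [Finset.mem_Ico, Finset.mem_range]; omega

/-- for a wide-(s) sequence `(b j)` there are bounded sequences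
`(f j)`, `(g j)` in `X*` with `f i (b j) = 1` for `j ≥ i`, `f i (b j) = 0` for `j < i`,
`g j (b i) = 1` for `j ≥ i`, and `g j (b i) = 0` for `j < i`. -/
theorem stmt_7 [CompleteSpace X] (b : ℕ → X) (hb : IsWideS b) :
    ∃ f g : ℕ → StrongDual ℝ X,
      (∃ C : ℝ, ∀ j, ‖f j‖ ≤ C) ∧ (∃ C : ℝ, ∀ j, ‖g j‖ ≤ C) ∧
      (∀ i j, i ≤ j → f i (b j) = 1) ∧ (∀ i j, j < i → f i (b j) = 0) ∧
      (∀ i j, i ≤ j → g j (b i) = 1) ∧ (∀ i j, j < i → g j (b i) = 0) := by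
  obtain ⟨lam, hlam, _hbasic, _hnorm, hc⟩ := hb
  have hlam0 : (0:ℝ) ≤ lam := by linarith
  -- general form of condition (c)
  have hc' : ∀ (c : ℕ → ℝ) (k n : ℕ),
      |∑ j ∈ Finset.Ico k n, c j| ≤ lam * ‖∑ j ∈ Finset.range n, c j • b j‖ := by
    intro c k n
    by_cases h : k ≤ n
    · exact hc c k n h
    · rw [Finset.Ico_eq_empty (by omega)]
      simp only [Finset.sum_empty, abs_zero]
      positivity
  -- linear independence of b
  have hli : LinearIndependent ℝ b := by
    rw [linearIndependent_iff']
    intro s g hsum i hi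
    set n := s.sup id + 1 with hn
    have hsn : s ⊆ Finset.range n := by
      intro j hj
      simp only [Finset.mem_range, hn]
      exact Nat.lt_succ_of_le (Finset.le_sup (f := id) hj)
    set c : ℕ → ℝ := fun j => if j ∈ s then g j else 0 with hcdef
    have hsum' : ∑ j ∈ Finset.range n, c j • b j = 0 := by
      calc ∑ j ∈ Finset.range n, c j • b j
          = ∑ j ∈ s, c j • b j :=
            (Finset.sum_subset hsn (fun j _ hj => by simp [hcdef, hj])).symm
        _ = ∑ j ∈ s, g j • b j := Finset.sum_congr rfl (fun j hj => by simp [hcdef, hj])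
        _ = 0 := hsum
    have htail : ∀ k, ∑ j ∈ Finset.Ico k n, c j = 0 := by
      intro k
      have := hc' c k n
      rw [hsum'] at this
      simp only [norm_zero, mul_zero] at this
      exact abs_nonpos_iff.mp this
    have hin : i < n := Finset.mem_range.mp (hsn hi)
    have hci : c i = 0 := by
      have hsplit := Finset.sum_eq_sum_Ico_succ_bot hin c
      have h1 := htail i
      have h2 := htail (i + 1)
      rw [hsplit, h2] at h1
      linarith
    simpa [hcdef, hi] using hci
  -- representation of span elements
  have hrep : ∀ x : Submodule.span ℝ (Set.range b), ∃ (n : ℕ) (c : ℕ → ℝ),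
      (x : X) = ∑ j ∈ Finset.range n, c j • b j := by
    rintro ⟨x, hx⟩
    rw [Finsupp.mem_span_range_iff_exists_finsupp] at hx
    obtain ⟨c, hcx⟩ := hx
    refine ⟨c.support.sup id + 1, c, ?_⟩
    have hs : c.support ⊆ Finset.range (c.support.sup id + 1) :=
      fun j hj => Finset.mem_range.mpr (Nat.lt_succ_of_le (Finset.le_sup (f := id) hj))
    show x = ∑ j ∈ Finset.range (c.support.sup id + 1), c j • b j
    rw [← hcx, Finsupp.sum]
    exact Finset.sum_subset hs (fun j _ hj => by
      simp [Finsupp.notMem_support_iff.mp hj])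
  set V := Submodule.span ℝ (Set.range b) with hV
  let B : Module.Basis ℕ ℝ V := Module.Basis.span hli
  have hmem : ∀ j, b j ∈ V := fun j => Submodule.subset_span ⟨j, rfl⟩
  have hB : ∀ j, (B j : X) = b j := fun j => congrArg Subtype.val (Module.Basis.span_apply hli j)
  have key : ∀ k, ∃ F : StrongDual ℝ X, ‖F‖ ≤ lam ∧
      ∀ j, F (b j) = if k ≤ j then 1 else 0 := by
    intro k
    set φ : V →ₗ[ℝ] ℝ := B.constr ℝ (fun j => if k ≤ j then (1:ℝ) else 0) with hφdef
    have hφb : ∀ j, φ ⟨b j, hmem j⟩ = if k ≤ j then 1 else 0 := by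
      intro j
      have hBj : (⟨b j, hmem j⟩ : V) = B j := by
        ext; exact (hB j).symm
      rw [hBj, hφdef, Module.Basis.constr_basis]
    have hφval : ∀ (n : ℕ) (c : ℕ → ℝ),
        φ (∑ j ∈ Finset.range n, c j • ⟨b j, hmem j⟩) = ∑ j ∈ Finset.Ico k n, c j := by
      intro n c
      rw [map_sum]
      simp only [map_smul, hφb, smul_eq_mul]
      rw [ico_eq_filter, Finset.sum_filter]
      apply Finset.sum_congr rfl
      intro j _
      by_cases h : k ≤ j <;> simp [h]
    have hφbound : ∀ v : V, ‖φ v‖ ≤ lam * ‖v‖ := by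
      intro v
      obtain ⟨n, c, hv⟩ := hrep v
      have hv' : v = ∑ j ∈ Finset.range n, c j • ⟨b j, hmem j⟩ := by
        ext
        push_cast
        exact hv
      have hnv : ‖v‖ = ‖∑ j ∈ Finset.range n, c j • b j‖ := by
        rw [← hv]; rfl
      rw [hv', hφval, Real.norm_eq_abs, ← hv', hnv]
      exact hc' c k n
    set φ' : V →L[ℝ] ℝ := φ.mkContinuous lam hφbound with hφ'def
    obtain ⟨F, hFext, hFnorm⟩ := exists_extension_norm_eq V φ'
    refine ⟨F, ?_, ?_⟩
    · rw [hFnorm]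
      exact LinearMap.mkContinuous_norm_le φ hlam0 hφbound
    · intro j
      have := hFext ⟨b j, hmem j⟩
      simp only [hφ'def, LinearMap.mkContinuous_apply] at this
      rw [this, hφb]
  choose f hfnorm hfval using key
  refine ⟨f, fun j => f 0 - f (j + 1), ⟨lam, hfnorm⟩, ⟨2 * lam, ?_⟩, ?_, ?_, ?_, ?_⟩
  · intro j
    calc ‖f 0 - f (j + 1)‖ ≤ ‖f 0‖ + ‖f (j + 1)‖ := norm_sub_le _ _
    _ ≤ 2 * lam := by linarith [hfnorm 0, hfnorm (j + 1)]
  · intro i j hij; rw [hfval i j]; simp [hij]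
  · intro i j hij; rw [hfval i j]; simp [Nat.not_le.mpr hij]
  · intro i j hij
    simp only [ContinuousLinearMap.sub_apply, hfval]
    rw [if_pos (Nat.zero_le i), if_neg (by omega)]
    ring
  · intro i j hij
    simp only [ContinuousLinearMap.sub_apply, hfval]
    rw [if_pos (Nat.zero_le i), if_pos (by omega)]
    ring
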